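/- arXiv:math/0501147 — 2 statements merged into one kernel-verified Lean document; each statement's English description precedes it below -/
import Mathlib

section
/- For every integer k ≥ 1 and n ≥ 1, C_{k,2}(n) = Σ_{i=1}^n ((2i−1)k − (i−1))/i · C_{k,2}(i−1) · C_{k,2}(n−i), where C_{k,2}(n) = (1/(2n+1)) · binomial((2n+1)k, n). -/
/-!
Write `A_n(x, z) = x / (x + n z) * binom(x + n z, n)`. Then `C_{k,2}(n) = A_n(k, 2k)`, while
`-A_i(-k, 2k) = ((2i - 1)k - (i - 1)) / i * C_{k,2}(i - 1)` by the absorption identity. The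
Hagen–Rothe convolution `∑ A_i(x, z) A_{n-i}(y, z) = A_n(x + y, z)` at `x = -k`, `y = k` has
right side `A_n(0, 2k) = 0` for `n ≥ 1`, and after splitting off the term `i = 0` it is the
recurrence.
The convolution follows from Rothe's identity
`∑ A_i(x, z) binom(y + (n - i) z, n - i) = binom(x + y + n z, n)`, proved by induction on `n` and,
for integral `x` and `z`, on `x`.
-/

open Finset

namespace Ring

section

variable {R : Type*} [CommRing R] [BinomialRing R]

theorem succ_mul_choose_succ (r : R) (k : ℕ) :
    ((k + 1 : ℕ) : R) * choose r (k + 1) = r * choose (r - 1) k := by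
  simpa [nsmul_eq_mul] using choose_smul_choose r (Nat.le_add_left 1 k)

/-- `rotheHagen x z n = x / (x + n z) * choose (x + n z) n`, written without division. -/
def rotheHagen (x z : R) : ℕ → R
  | 0 => 1
  | n + 1 => choose (x + (n + 1) * z) (n + 1) - z * choose (x + (n + 1) * z - 1) n

variable (x y z : R)

@[simp]
theorem rotheHagen_zero : rotheHagen x z 0 = 1 := rfl

theorem rotheHagen_succ (n : ℕ) :
    rotheHagen x z (n + 1) =
      choose (x + (n + 1) * z) (n + 1) - z * choose (x + (n + 1) * z - 1) n :=
  rfl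

theorem add_mul_mul_rotheHagen (n : ℕ) :
    (x + n * z) * rotheHagen x z n = x * choose (x + n * z) n := by
  cases n with
  | zero => simp
  | succ n =>
    have h := succ_mul_choose_succ (x + (n + 1) * z) n
    push_cast at h ⊢
    rw [rotheHagen_succ]
    linear_combination z * h

theorem rotheHagen_zero_left_succ (n : ℕ) : rotheHagen 0 z (n + 1) = 0 := by
  -- only a local instance in Mathlib
  have := BinomialRing.toIsAddTorsionFree (R := R)
  apply nsmul_right_injective (Nat.succ_ne_zero n)
  have h := succ_mul_choose_succ ((n + 1) * z) n
  push_cast at h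
  simp only [rotheHagen_succ, zero_add, nsmul_eq_mul, smul_zero, Nat.cast_succ]
  linear_combination h

theorem rotheHagen_succ_eq_sub_one (n : ℕ) :
    rotheHagen x z (n + 1) = rotheHagen (x - 1) z (n + 1) + rotheHagen (x + z - 1) z n := by
  cases n with
  | zero => simp [rotheHagen_succ]
  | succ n =>
    have h₁ := choose_succ_succ (x - 1 + (n + 2) * z) (n + 1)
    have h₂ := choose_succ_succ (x - 1 + (n + 2) * z - 1) n
    simp only [rotheHagen_succ]
    push_cast
    ring_nf at h₁ h₂ ⊢
    linear_combination h₁ - z * h₂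

theorem sum_rotheHagen_mul_choose_succ_sub (n : ℕ) :
    ∑ p ∈ antidiagonal (n + 1), rotheHagen x z p.1 * choose (y + p.2 * z) p.2
        - choose (x + y + (n + 1 : ℕ) * z) (n + 1) =
      (∑ p ∈ antidiagonal (n + 1), rotheHagen (x - 1) z p.1 * choose (y + p.2 * z) p.2
          - choose (x - 1 + y + (n + 1 : ℕ) * z) (n + 1)) +
        (∑ p ∈ antidiagonal n, rotheHagen (x + z - 1) z p.1 * choose (y + p.2 * z) p.2
          - choose (x + z - 1 + y + n * z) n) := by
  have pascal : choose (x + y + (n + 1 : ℕ) * z) (n + 1) =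
      choose (x + z - 1 + y + n * z) n + choose (x - 1 + y + (n + 1 : ℕ) * z) (n + 1) := by
    rw [show x - 1 + y + (n + 1 : ℕ) * z = x + z - 1 + y + n * z by push_cast; ring,
      ← choose_succ_succ]
    congr 1
    push_cast
    ring
  simp only [Nat.sum_antidiagonal_succ, rotheHagen_succ_eq_sub_one x, add_mul, sum_add_distrib,
    rotheHagen_zero, pascal]
  ring

/-- Rothe's identity. -/
theorem sum_rotheHagen_mul_choose (x z : ℤ) (y : R) (n : ℕ) :
    ∑ p ∈ antidiagonal n, rotheHagen (x : R) z p.1 * choose (y + p.2 * z) p.2 =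
      choose (x + y + n * z) n := by
  induction n generalizing x with
  | zero => simp
  | succ n ih =>
    -- By `sum_rotheHagen_mul_choose_succ_sub` and `ih` the defect is invariant under `x ↦ x - 1`;
    -- `z` must be integral for `ih` to apply at `x + z - 1`.
    induction x using Int.induction_on with
    | zero => simp [Nat.sum_antidiagonal_succ, rotheHagen_zero_left_succ]
    | succ m hm =>
      have h := sum_rotheHagen_mul_choose_succ_sub ((m + 1 : ℤ) : R) y z n
      rw [show ((m + 1 : ℤ) : R) - 1 = ((m : ℤ) : R) by push_cast; ring,
        show ((m + 1 : ℤ) : R) + z - 1 = ((m + z : ℤ) : R) by push_cast; ring,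
        hm, ih, sub_self, sub_self, add_zero] at h
      exact sub_eq_zero.mp h
    | pred m hm =>
      have h := sum_rotheHagen_mul_choose_succ_sub ((-m : ℤ) : R) y z n
      rw [show ((-m : ℤ) : R) - 1 = ((-m - 1 : ℤ) : R) by push_cast; ring,
        show ((-m : ℤ) : R) + z - 1 = ((-m - 1 + z : ℤ) : R) by push_cast; ring,
        hm, ih, sub_self, sub_self, add_zero] at h
      exact sub_eq_zero.mp h.symm

/-- The Hagen–Rothe convolution identity. -/
theorem sum_rotheHagen_mul_rotheHagen (x z : ℤ) (y : R) (n : ℕ) :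
    ∑ p ∈ antidiagonal n, rotheHagen (x : R) z p.1 * rotheHagen y z p.2 =
      rotheHagen (x + y) z n := by
  cases n with
  | zero => simp
  | succ n =>
    have h₁ := sum_rotheHagen_mul_choose x z y (n + 1)
    have h₂ := sum_rotheHagen_mul_choose x z (y + z - 1) n
    have split : ∀ p ∈ antidiagonal n, rotheHagen (x : R) z p.1 * rotheHagen y z (p.2 + 1) =
        rotheHagen (x : R) z p.1 * choose (y + (p.2 + 1 : ℕ) * z) (p.2 + 1) -
          z * (rotheHagen (x : R) z p.1 * choose (y + z - 1 + p.2 * z) p.2) := by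
      intro p _
      rw [rotheHagen_succ]
      push_cast
      ring_nf
    rw [Nat.sum_antidiagonal_succ'] at h₁ ⊢
    rw [sum_congr rfl split, sum_sub_distrib, ← mul_sum, rotheHagen_succ ((x : R) + y)]
    simp only [rotheHagen_zero, choose_zero_right] at h₁ ⊢
    push_cast at h₁ h₂ ⊢
    rw [show (x : R) + (y + z - 1) + n * z = x + y + (n + 1) * z - 1 by ring] at h₂
    linear_combination h₁ - z * h₂

end

theorem rotheHagen_eq_div {K : Type*} [Field K] [BinomialRing K] {x : K} (z : K) {n : ℕ}
    (h : x + n * z ≠ 0) :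
    rotheHagen x z n = x / (x + n * z) * choose (x + n * z) n := by
  rw [div_mul_eq_mul_div, eq_div_iff h, mul_comm, add_mul_mul_rotheHagen]

end Ring

open Ring

/-- `C_{k,2}(n)` -/
def kCatalan (k n : ℕ) : ℚ := (((2 * n + 1) * k).choose n : ℚ) / (2 * n + 1)

theorem rotheHagen_eq_kCatalan {k : ℕ} (hk : k ≠ 0) (n : ℕ) :
    rotheHagen (k : ℚ) (2 * k) n = kCatalan k n := by
  have hM : (k : ℚ) + n * (2 * k) = ((2 * n + 1) * k : ℕ) := by push_cast; ring
  have hM0 : (((2 * n + 1) * k : ℕ) : ℚ) ≠ 0 := by positivity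
  rw [rotheHagen_eq_div _ (hM ▸ hM0), hM, choose_natCast, kCatalan]
  field_simp
  push_cast
  ring

theorem rotheHagen_neg_succ {k : ℕ} (hk : k ≠ 0) (j : ℕ) :
    rotheHagen (-k : ℚ) (2 * k) (j + 1) =
      -((((2 * j + 1 : ℕ) : ℚ) * k - j) / (j + 1) * kCatalan k j) := by
  have hM : (-k : ℚ) + (j + 1 : ℕ) * (2 * k) = ((2 * j + 1) * k : ℕ) := by push_cast; ring
  have hM0 : (((2 * j + 1) * k : ℕ) : ℚ) ≠ 0 := by positivity
  have hjM : j ≤ (2 * j + 1) * k := le_trans (by omega) (Nat.le_mul_of_pos_right _ (by omega))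
  have absorb := Nat.choose_succ_right_eq ((2 * j + 1) * k) j
  rw [← Nat.cast_inj (R := ℚ)] at absorb
  push_cast [Nat.cast_sub hjM] at absorb
  rw [rotheHagen_eq_div _ (hM ▸ hM0), hM, choose_natCast, kCatalan]
  push_cast
  field_simp
  linear_combination -absorb

/-- `C_{k,2}(n) = Σ_{i=1}^n ((2i-1)k - (i-1))/i · C_{k,2}(i-1)·C_{k,2}(n-i)`, where
`C_{k,2}(n) = (1/(2n+1))·binom((2n+1)k, n)`. -/
theorem k2_catalan_recurrence (k : ℕ) (hk : 1 ≤ k) (n : ℕ) (hn : 1 ≤ n) :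
    (((2 * n + 1) * k).choose n : ℚ) / (2 * n + 1)
      = ∑ i ∈ Finset.Icc 1 n,
          (((2 * i - 1 : ℕ) : ℚ) * k - ((i - 1 : ℕ) : ℚ)) / i *
            ((((2 * (i - 1) + 1) * k).choose (i - 1) : ℚ) / (2 * (i - 1) + 1)) *
            ((((2 * (n - i) + 1) * k).choose (n - i) : ℚ) / (2 * (n - i) + 1)) := by
  obtain ⟨m, rfl⟩ : ∃ m, n = m + 1 := ⟨n - 1, by omega⟩
  have hk0 : k ≠ 0 := by omega
  have hagen := sum_rotheHagen_mul_rotheHagen (-k : ℤ) (2 * k : ℤ) (k : ℚ) (m + 1)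
  push_cast at hagen
  rw [neg_add_cancel, rotheHagen_zero_left_succ, Nat.sum_antidiagonal_succ, rotheHagen_zero,
    one_mul, Nat.sum_antidiagonal_eq_sum_range_succ_mk, rotheHagen_eq_kCatalan hk0] at hagen
  change kCatalan k (m + 1) = _
  rw [eq_neg_of_add_eq_zero_left hagen, ← sum_neg_distrib, ← Ico_add_one_right_eq_Icc,
    sum_Ico_eq_sum_range]
  refine sum_congr rfl fun j hj => ?_
  have hjm : j ≤ m := Nat.lt_succ_iff.mp (mem_range.mp hj)
  rw [rotheHagen_neg_succ hk0, rotheHagen_eq_kCatalan hk0, kCatalan, kCatalan]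
  have e1 : 2 * (1 + j) - 1 = 2 * j + 1 := by omega
  have e2 : m + 1 - (1 + j) = m - j := by omega
  simp only [e1, e2, Nat.add_sub_cancel_left]
  push_cast [Nat.cast_sub hjm]
  ring
end

section
/- For n ≥ 0, Σ_{F∈F(n)} Π_{v∈V(F)} (x + 1/h_v) = (1/((2n+1)·n!)) · Π_{i=0}^{n−1} ((2n+1−i)x + (2n+1−2i)), as polynomials in x. -/
open Polynomial

inductive PlaneTree : Type where
  | node : List PlaneTree → PlaneTree

namespace PlaneTree

/-- total number of vertices -/
def numVertices : PlaneTree → ℕ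
  | node ts => 1 + (ts.attach.map (fun t => numVertices t.1)).sum
decreasing_by simp only [PlaneTree.node.sizeOf_spec]; exact Nat.lt_add_left 1 (List.sizeOf_lt_of_mem t.2)

/-- number of internal vertices (vertices with at least one child) -/
def numInternal : PlaneTree → ℕ
  | node ts => (if ts.isEmpty then 0 else 1) + (ts.attach.map (fun t => numInternal t.1)).sum
decreasing_by simp only [PlaneTree.node.sizeOf_spec]; exact Nat.lt_add_left 1 (List.sizeOf_lt_of_mem t.2)

/-- product of `g h_v` over all internal vertices `v`, where `h_v` is the number of
internal vertices of the subtree rooted at `v` -/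
def internalHookProd {α : Type} [CommMonoid α] (g : ℕ → α) : PlaneTree → α
  | node ts =>
    (if ts.isEmpty then 1 else g (numInternal (node ts))) *
      (ts.attach.map (fun t => internalHookProd g t.1)).prod
decreasing_by simp only [PlaneTree.node.sizeOf_spec]; exact Nat.lt_add_left 1 (List.sizeOf_lt_of_mem t.2)

/-- product of `g h_v` over all vertices `v`, where `h_v` is the number of
vertices of the subtree rooted at `v` -/
def vertexHookProd {α : Type} [CommMonoid α] (g : ℕ → α) : PlaneTree → α
  | node ts =>
    g (numVertices (node ts)) * (ts.attach.map (fun t => vertexHookProd g t.1)).prod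
decreasing_by simp only [PlaneTree.node.sizeOf_spec]; exact Nat.lt_add_left 1 (List.sizeOf_lt_of_mem t.2)

/-- every internal vertex has exactly `a` children -/
def IsFullAry (a : ℕ) : PlaneTree → Prop
  | node ts => (ts.length = 0 ∨ ts.length = a) ∧ ∀ t ∈ ts, IsFullAry a t

/-- `IsKMAry k m b T`: with the root of `T` viewed as being on a level of parity `b`
(`b = false` meaning even), every vertex on an even level has `k` children and
every vertex on an odd level has `m` or `0` children. -/
def IsKMAry (k m : ℕ) : Bool → PlaneTree → Prop
  | b, node ts =>
    (if b then ts.length = m ∨ ts.length = 0 else ts.length = k) ∧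
      ∀ t ∈ ts, IsKMAry k m (!b) t

/-- number of vertices on levels of parity `b`, the root having parity `cur` -/
def parityVertices (b cur : Bool) : PlaneTree → ℕ
  | node ts =>
    (if cur = b then 1 else 0) + (ts.attach.map (fun t => parityVertices b (!cur) t.1)).sum
termination_by T => sizeOf T
decreasing_by simp only [PlaneTree.node.sizeOf_spec]; exact Nat.lt_add_left 1 (List.sizeOf_lt_of_mem t.2)

/-- number of internal vertices on levels of parity `b`, the root having parity `cur` -/
def parityInternal (b cur : Bool) : PlaneTree → ℕ
  | node ts =>
    (if cur = b ∧ ¬ts.isEmpty then 1 else 0) +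
      (ts.attach.map (fun t => parityInternal b (!cur) t.1)).sum
termination_by T => sizeOf T
decreasing_by simp only [PlaneTree.node.sizeOf_spec]; exact Nat.lt_add_left 1 (List.sizeOf_lt_of_mem t.2)

/-- the order of a `(k,m)`-ary tree: the number of internal (crucial) vertices on odd levels -/
def kmOrder (T : PlaneTree) : ℕ := parityInternal true false T

end PlaneTree

/-!
Splitting off the first tree of a forest gives the recurrence `S 0 = 1`,
`S (n + 1) = ∑_{i + j = n} (x + 1/(i + 1)) S i S j` for the forest sums, so it suffices that the
closed form satisfies it. Put `a = (x + 1)/(x + 2)` and `A_k(P) = rothe P (2a) k / k!`, where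
`rothe P Z k = P ∏_{i=1}^{k-1} (P + kZ - i)` is `k!` times the Rothe polynomial
`P/(P + kZ) · binom(P + kZ, k)`. The closed form at `x` is `(x + 2)^n A_n(a)`, and
`(x + 1/(j + 1))` times it is `-(x + 2)^(j + 1) A_(j+1)(-a)`, so the recurrence is the case
`P = -a`, `Q = a` of the Hagen–Rothe convolution `∑_{k + l = m} A_k(P) A_l(Q) = A_m(P + Q)`.
That identity holds for natural `P` and `Z` by induction on `P`, along
`rothe (P + 1) Z (k + 1) = rothe P Z (k + 1) + (k + 1) rothe (P + Z) Z k`,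
and then everywhere because both sides are polynomials in `P` and in `Z`.
-/

open Finset

section Rothe

variable {R : Type*} [CommRing R]

def rothe (P Z : R) : ℕ → R
  | 0 => 1
  | k + 1 => P * ∏ i ∈ range k, (P + (k + 1) * Z - (i + 1))

@[simp] lemma rothe_zero (P Z : R) : rothe P Z 0 = 1 := rfl

lemma rothe_succ (P Z : R) (k : ℕ) :
    rothe P Z (k + 1) = P * ∏ i ∈ range k, (P + (k + 1) * Z - (i + 1)) := rfl

lemma rothe_zero_left (Z : R) {k : ℕ} (hk : k ≠ 0) : rothe 0 Z k = 0 := by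
  obtain ⟨k, rfl⟩ := Nat.exists_eq_succ_of_ne_zero hk
  simp [rothe_succ]

lemma Polynomial.eval_rothe (x : R) (P Z : R[X]) (k : ℕ) :
    (rothe P Z k).eval x = rothe (P.eval x) (Z.eval x) k := by
  cases k <;> simp [rothe_succ, Polynomial.eval_prod]

lemma rothe_add_one (P Z : R) (k : ℕ) :
    rothe (P + 1) Z (k + 1) = rothe P Z (k + 1) + (k + 1) * rothe (P + Z) Z k := by
  cases k with
  | zero => simp [rothe_succ]
  | succ k =>
    set Y := P + (k + 2) * Z
    set D := ∏ i ∈ range k, (Y - (i + 1))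
    have h₁ : ∏ i ∈ range (k + 1), (P + 1 + (↑(k + 1) + 1) * Z - (i + 1)) = Y * D := by
      rw [prod_range_succ', mul_comm]
      congr 1
      · push_cast; ring
      · exact prod_congr rfl fun i _ => by push_cast; ring
    have h₂ :
        ∏ i ∈ range (k + 1), (P + (↑(k + 1) + 1) * Z - (i + 1)) = D * (Y - (k + 1)) := by
      rw [prod_range_succ]
      congr 1
      · exact prod_congr rfl fun i _ => by push_cast; ring
      · push_cast; ring
    have h₃ : ∏ i ∈ range k, (P + Z + (k + 1) * Z - (i + 1)) = D :=
      prod_congr rfl fun i _ => by ring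
    rw [rothe_succ, rothe_succ, rothe_succ, h₁, h₂, h₃]
    push_cast
    ring

lemma rothe_convolution_natCast (m : ℕ) : ∀ (p z : ℕ) (Q : R),
    ∑ kl ∈ antidiagonal m, (m.choose kl.1 : R) * rothe (p : R) z kl.1 * rothe Q z kl.2
      = rothe (p + Q) z m := by
  induction m with
  | zero => simp
  | succ m ih =>
    intro p z Q
    induction p with
    | zero => simp [Nat.sum_antidiagonal_succ, rothe_zero_left]
    | succ p ihp =>
      have split : ∀ kl ∈ antidiagonal m,
          ((m + 1).choose (kl.1 + 1) : R) * rothe ((p : R) + 1) z (kl.1 + 1) * rothe Q z kl.2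
            = ((m + 1).choose (kl.1 + 1) : R) * rothe (p : R) z (kl.1 + 1) * rothe Q z kl.2
              + (m + 1) * ((m.choose kl.1 : R) * rothe ((p + z : ℕ) : R) z kl.1
                * rothe Q z kl.2) := by
        intro kl _
        have hc := congrArg (Nat.cast (R := R)) (Nat.add_one_mul_choose_eq m kl.1)
        push_cast at hc ⊢
        rw [rothe_add_one]
        linear_combination -(rothe (↑p + ↑z) (↑z) kl.1 * rothe Q (↑z) kl.2) * hc
      simp only [Nat.sum_antidiagonal_succ, Nat.cast_succ] at ihp ⊢
      rw [sum_congr rfl split, sum_add_distrib, ← mul_sum, ← add_assoc, ih]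
      simp only [Nat.choose_zero_right, Nat.cast_one, rothe_zero, one_mul] at ihp ⊢
      rw [ihp, Nat.cast_add, add_right_comm (p : R) (z : R), add_right_comm (p : R) 1,
        rothe_add_one]

end Rothe

section Extension

variable {R : Type*} [CommRing R] [IsDomain R] [CharZero R]

lemma Polynomial.eq_of_forall_eval_natCast_eq {f g : R[X]}
    (h : ∀ n : ℕ, f.eval (n : R) = g.eval (n : R)) : f = g :=
  eq_of_infinite_eval_eq f g <| (Set.infinite_range_of_injective Nat.cast_injective).mono <| by
    rintro _ ⟨n, rfl⟩
    exact h n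

lemma rothe_convolution_of_natCast_right (m z : ℕ) (P Q : R) :
    ∑ kl ∈ antidiagonal m, (m.choose kl.1 : R) * rothe P (z : R) kl.1 * rothe Q (z : R) kl.2
      = rothe (P + Q) (z : R) m := by
  have h : ∑ kl ∈ antidiagonal m,
      (m.choose kl.1 : R[X]) * rothe X (z : R[X]) kl.1 * rothe (C Q) (z : R[X]) kl.2
        = rothe (X + C Q) (z : R[X]) m :=
    eq_of_forall_eval_natCast_eq fun p => by
      simpa [eval_finsetSum, eval_rothe] using rothe_convolution_natCast m p z Q
  simpa [eval_finsetSum, eval_rothe] using congrArg (eval P) h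

theorem rothe_convolution (m : ℕ) (P Q Z : R) :
    ∑ kl ∈ antidiagonal m, (m.choose kl.1 : R) * rothe P Z kl.1 * rothe Q Z kl.2
      = rothe (P + Q) Z m := by
  have h : ∑ kl ∈ antidiagonal m,
      (m.choose kl.1 : R[X]) * rothe (C P) X kl.1 * rothe (C Q) X kl.2
        = rothe (C P + C Q) X m :=
    eq_of_forall_eval_natCast_eq fun z => by
      simpa [eval_finsetSum, eval_rothe] using rothe_convolution_of_natCast_right m z P Q
  simpa [eval_finsetSum, eval_rothe] using congrArg (eval Z) h

end Extension

theorem rothe_convolution_div_factorial {K : Type*} [Field K] [CharZero K] (m : ℕ) (P Q Z : K) :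
    ∑ kl ∈ antidiagonal m, rothe P Z kl.1 / kl.1.factorial * (rothe Q Z kl.2 / kl.2.factorial)
      = rothe (P + Q) Z m / m.factorial := by
  rw [← rothe_convolution, sum_div]
  refine sum_congr rfl fun kl hkl => ?_
  obtain ⟨k, l⟩ := kl
  dsimp only
  rw [HasAntidiagonal.mem_antidiagonal] at hkl
  subst hkl
  have h := congrArg (Nat.cast (R := K)) (Nat.add_choose_mul_factorial_mul_factorial l k)
  rw [add_comm l k] at h
  have hc : ((k + l).choose k : K) ≠ 0 := Nat.cast_ne_zero.mpr (Nat.choose_pos (by omega)).ne'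
  rw [← h]
  push_cast
  field_simp

section TwoMul

variable {R : Type*} [CommRing R]

lemma two_mul_add_one_mul_rothe (P : R) (n : ℕ) :
    (2 * n + 1) * rothe P (2 * P) n = ∏ i ∈ range n, ((2 * n + 1) * P - i) := by
  cases n with
  | zero => simp
  | succ n =>
    rw [rothe_succ, prod_range_succ']
    push_cast
    rw [prod_congr rfl fun (i : ℕ) _ =>
      show P + (n + 1) * (2 * P) - (i + 1) = (2 * (n + 1) + 1) * P - (i + 1) by ring]
    ring

lemma rothe_neg_succ (P : R) (n : ℕ) :
    rothe (-P) (2 * P) (n + 1) = -(rothe P (2 * P) n * ((2 * n + 1) * P - n)) := by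
  cases n with
  | zero => simp [rothe_succ]
  | succ n =>
    rw [rothe_succ, rothe_succ, prod_range_succ]
    push_cast
    rw [prod_congr rfl fun (i : ℕ) _ =>
      show -P + (n + 1 + 1) * (2 * P) - (i + 1) = P + (n + 1) * (2 * P) - (i + 1) by ring]
    ring

end TwoMul

noncomputable def hookClosedForm (n : ℕ) : ℚ[X] :=
  C (1 / (((2 * n + 1) * n.factorial : ℕ) : ℚ)) *
    ∏ i ∈ range n, (C ((2 * n + 1 - i : ℕ) : ℚ) * X + C (((2 * n + 1 : ℕ) : ℚ) - 2 * i))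

section Evaluation

variable {x a : ℚ}

lemma eval_hookClosedForm (ha : (x + 2) * a = x + 1) (n : ℕ) :
    (hookClosedForm n).eval x = (x + 2) ^ n * (rothe a (2 * a) n / n.factorial) := by
  have factor : ∀ i ∈ range n,
      (C ((2 * n + 1 - i : ℕ) : ℚ) * X + C (((2 * n + 1 : ℕ) : ℚ) - 2 * i)).eval x
        = (x + 2) * ((2 * n + 1) * a - i) := by
    intro i hi
    have : i ≤ 2 * n + 1 := by have := mem_range.mp hi; omega
    simp only [eval_add, eval_mul, eval_C, eval_X, Nat.cast_sub this]
    push_cast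
    linear_combination -(2 * (n : ℚ) + 1) * ha
  rw [hookClosedForm, eval_mul, eval_C, eval_prod, prod_congr rfl factor, prod_mul_distrib,
    prod_const, card_range, ← two_mul_add_one_mul_rothe]
  push_cast
  field_simp

lemma eval_X_add_mul_hookClosedForm (ha : (x + 2) * a = x + 1) (j : ℕ) :
    ((X + C (1 / ((j + 1 : ℕ) : ℚ))) * hookClosedForm j).eval x
      = -((x + 2) ^ (j + 1) * (rothe (-a) (2 * a) (j + 1) / (j + 1).factorial)) := by
  rw [eval_mul, eval_hookClosedForm ha, rothe_neg_succ, Nat.factorial_succ]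
  simp only [eval_add, eval_X, eval_C]
  push_cast
  field_simp
  linear_combination -(x + 2) ^ j * rothe a (2 * a) j * (2 * (j : ℚ) + 1) * ha

end Evaluation

lemma hookClosedForm_succ (n : ℕ) :
    hookClosedForm (n + 1) = ∑ ij ∈ antidiagonal n,
      (X + C (1 / ((ij.1 + 1 : ℕ) : ℚ))) * hookClosedForm ij.1 * hookClosedForm ij.2 := by
  refine eq_of_infinite_eval_eq _ _ <| (Set.finite_singleton (-2 : ℚ)).infinite_compl.mono ?_
  intro x hx
  have ha : (x + 2) * ((x + 1) / (x + 2)) = x + 1 :=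
    mul_div_cancel₀ _ fun h => hx (eq_neg_of_add_eq_zero_left h)
  set a := (x + 1) / (x + 2)
  have hconv := rothe_convolution_div_factorial (n + 1) (-a) a (2 * a)
  rw [neg_add_cancel, rothe_zero_left _ n.succ_ne_zero, zero_div, Nat.sum_antidiagonal_succ]
    at hconv
  have term : ∀ ij ∈ antidiagonal n,
      ((X + C (1 / ((ij.1 + 1 : ℕ) : ℚ))) * hookClosedForm ij.1 * hookClosedForm ij.2).eval x
        = -(x + 2) ^ (n + 1) * (rothe (-a) (2 * a) (ij.1 + 1) / (ij.1 + 1).factorial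
            * (rothe a (2 * a) ij.2 / ij.2.factorial)) := by
    rintro ⟨i, j⟩ hij
    rw [HasAntidiagonal.mem_antidiagonal] at hij
    subst hij
    rw [eval_mul, eval_X_add_mul_hookClosedForm ha, eval_hookClosedForm ha]
    ring
  rw [Set.mem_ofPred_eq, eval_finsetSum, sum_congr rfl term, ← mul_sum, eval_hookClosedForm ha]
  simp only [Nat.factorial_zero, Nat.cast_one, div_one, rothe_zero, one_mul] at hconv
  linear_combination (x + 2) ^ (n + 1) * hconv

lemma finsum_subtype_eq_sum {α M : Type*} [AddCommMonoid M] {p : α → Prop} (s : Finset α)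
    (hs : ∀ a, a ∈ s ↔ p a) (f : α → M) :
    ∑ᶠ a : Subtype p, f a = ∑ a ∈ s, f a := by
  rw [finsum_subtype_eq_finsum_cond, ← finsum_mem_coe_finset]
  simp only [Finset.mem_coe, hs]

noncomputable instance : DecidableEq PlaneTree := Classical.decEq _

namespace PlaneTree

lemma numVertices_node (ts : List PlaneTree) :
    (node ts).numVertices = 1 + (ts.map numVertices).sum := by
  rw [numVertices, List.attach_map_val]

lemma vertexHookProd_node {α : Type} [CommMonoid α] (g : ℕ → α) (ts : List PlaneTree) :
    (node ts).vertexHookProd g = g (node ts).numVertices * (ts.map (vertexHookProd g)).prod := by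
  rw [vertexHookProd, List.attach_map_val]

noncomputable def forestsOf : ℕ → Finset (List PlaneTree)
  | 0 => {[]}
  | n + 1 => (antidiagonal n).attach.biUnion fun ij =>
      (forestsOf ij.1.1 ×ˢ forestsOf ij.1.2).image fun ab => node ab.1 :: ab.2
decreasing_by
  · exact Nat.antidiagonal.fst_lt ij.2
  · exact Nat.antidiagonal.snd_lt ij.2

lemma mem_forestsOf (n : ℕ) (F : List PlaneTree) :
    F ∈ forestsOf n ↔ (F.map numVertices).sum = n := by
  induction n using Nat.strong_induction_on generalizing F with
  | _ n ih =>
  rcases n with _ | n <;> rcases F with _ | ⟨⟨ts⟩, F⟩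
  · simp [forestsOf]
  · simp [forestsOf, numVertices_node]
  · simp [forestsOf]
  · simp only [forestsOf, mem_biUnion, mem_attach, true_and, mem_image, mem_product,
      Subtype.exists, HasAntidiagonal.mem_antidiagonal, List.cons.injEq, node.injEq,
      List.map_cons, List.sum_cons, numVertices_node]
    constructor
    · rintro ⟨⟨i, j⟩, hij, ⟨a, b⟩, ⟨ha, hb⟩, rfl, rfl⟩
      rw [ih i (by omega), ih j (by omega)] at *
      omega
    · intro h
      exact ⟨((ts.map numVertices).sum, (F.map numVertices).sum), by omega, (ts, F),
        ⟨(ih _ (by omega) ts).mpr rfl, (ih _ (by omega) F).mpr rfl⟩, rfl, rfl⟩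

noncomputable def forestHookSum {α : Type} [CommSemiring α] (g : ℕ → α) (n : ℕ) : α :=
  ∑ F ∈ forestsOf n, (F.map (vertexHookProd g)).prod

variable {α : Type} [CommSemiring α] (g : ℕ → α)

lemma forestHookSum_zero : forestHookSum g 0 = 1 := by
  simp [forestHookSum, forestsOf]

/-- The first tree of the forest has `i + 1` vertices, the rest of the forest `j`. -/
lemma forestHookSum_succ (n : ℕ) :
    forestHookSum g (n + 1) = ∑ ij ∈ antidiagonal n,
      g (ij.1 + 1) * forestHookSum g ij.1 * forestHookSum g ij.2 := by
  have disjoint : Set.PairwiseDisjoint ↑(antidiagonal n).attach fun ij : antidiagonal n =>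
      (forestsOf ij.1.1 ×ˢ forestsOf ij.1.2).image fun ab => node ab.1 :: ab.2 := by
    rintro ⟨⟨i, j⟩, hij⟩ - ⟨⟨i', j'⟩, hij'⟩ - hne
    refine Finset.disjoint_left.mpr ?_
    rw [HasAntidiagonal.mem_antidiagonal] at hij hij'
    simp only [mem_image, mem_product]
    rintro _ ⟨⟨a, b⟩, ⟨ha, -⟩, rfl⟩ ⟨⟨a', b'⟩, ⟨ha', -⟩, heq⟩
    obtain ⟨rfl, -⟩ : a' = a ∧ b' = b := by simpa using heq
    rw [mem_forestsOf] at ha ha'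
    obtain rfl : i' = i := ha'.symm.trans ha
    obtain rfl : j' = j := by omega
    exact hne rfl
  rw [forestHookSum, forestsOf, sum_biUnion disjoint, ← sum_attach (antidiagonal n)]
  refine sum_congr rfl fun ⟨⟨i, j⟩, hij⟩ _ => ?_
  dsimp only
  rw [sum_image fun _ _ _ _ h => by simpa [Prod.ext_iff] using h, sum_product,
    forestHookSum, forestHookSum, mul_assoc, sum_mul_sum, mul_sum]
  refine sum_congr rfl fun a ha => ?_
  rw [mul_sum]
  refine sum_congr rfl fun b _ => ?_
  rw [List.map_cons, List.prod_cons, vertexHookProd_node, numVertices_node,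
    (mem_forestsOf i a).mp ha, add_comm 1]
  ring

end PlaneTree

open PlaneTree in
lemma forestHookSum_eq_hookClosedForm (n : ℕ) :
    forestHookSum (fun h => X + C (1 / (h : ℚ))) n = hookClosedForm n := by
  induction n using Nat.strong_induction_on with
  | _ n ih =>
  rcases n with _ | n
  · simp [forestHookSum_zero, hookClosedForm]
  · rw [forestHookSum_succ, hookClosedForm_succ]
    refine sum_congr rfl fun ij hij => ?_
    have := HasAntidiagonal.mem_antidiagonal.mp hij
    rw [ih ij.1 (by omega), ih ij.2 (by omega)]

/-- `Σ_{F∈F(n)} Π_{v∈V(F)} (x + 1/h_v) = (1/((2n+1)·n!)) · Π_{i=0}^{n-1} ((2n+1-i)x + (2n+1-2i))`,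
summed over plane forests with `n` vertices. -/
theorem hook_poly_forests_shifted (n : ℕ) :
    (∑ᶠ F : {F : List PlaneTree // (F.map PlaneTree.numVertices).sum = n},
        (F.1.map (PlaneTree.vertexHookProd
          (fun h => Polynomial.X + Polynomial.C (1 / (h : ℚ))))).prod)
      = Polynomial.C (1 / (((2 * n + 1) * n.factorial : ℕ) : ℚ)) *
        ∏ i ∈ Finset.range n,
          (Polynomial.C ((2 * n + 1 - i : ℕ) : ℚ) * Polynomial.X +
            Polynomial.C (((2 * n + 1 : ℕ) : ℚ) - 2 * i)) := by
  exact (finsum_subtype_eq_sum _ (PlaneTree.mem_forestsOf n) _).trans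
    (forestHookSum_eq_hookClosedForm n)
end
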